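/- arXiv:1905.06946 — 10 statements merged into one kernel-verified Lean document; each statement's English description precedes it below -/
import Mathlib

section
/- Signaling is used only for the best-response type (Theorem 1): if (p0, p1, q0, q1, b) is an optimal solution of the signaling LP at t*, then p1(t) = 0 and q1(t) = 0 for every t ∈ T with t ≠ t*. -/
open Finset

/-- Feasibility for the signaling LP at the designated type `tstar`. -/
def SigFeasible {T : Type*} [Fintype T] (Uac Uau k : T → ℝ) (B : ℝ) (tstar : T)
    (p0 p1 q0 q1 b : T → ℝ) : Prop :=
  (∀ t, 0 ≤ p0 t) ∧ (∀ t, 0 ≤ p1 t) ∧ (∀ t, 0 ≤ q0 t) ∧ (∀ t, 0 ≤ q1 t) ∧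
  (∀ t, 0 ≤ b t ∧ b t ≤ B) ∧
  (∀ t, p0 t * Uac t + q0 t * Uau t ≤ p0 tstar * Uac tstar + q0 tstar * Uau tstar) ∧
  (∀ t, p1 t * Uac t + q1 t * Uau t ≤ 0) ∧
  (∀ t, p0 t + p1 t = k t * b t) ∧
  (∀ t, p0 t + p1 t + q0 t + q1 t = 1) ∧
  (∑ t, b t ≤ B)

/-- Objective value of the signaling LP at the designated type `tstar`. -/
def SigObj {T : Type*} [Fintype T] (Udc Udu P E C : T → ℝ) (tstar : T)
    (p0 p1 q0 q1 : T → ℝ) : ℝ :=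
  p0 tstar * Udc tstar + q0 tstar * Udu tstar +
    ∑ t, (p1 t + q1 t) * P t * E t * C t

/-- Theorem 1: at an optimal solution of the signaling LP, no warning signal is
used for any type other than the best-response type `tstar`. -/
theorem warning_only_for_best_type {T : Type*} [Fintype T] [Nonempty T]
    (Uac Uau Udc Udu P E C k : T → ℝ) (B : ℝ) (tstar : T)
    (hUac : ∀ t, Uac t < 0) (hUau : ∀ t, 0 < Uau t)
    (hUdc : ∀ t, 0 ≤ Udc t) (hUdu : ∀ t, Udu t < 0)
    (hP : ∀ t, 0 < P t) (hE : ∀ t, 0 < E t) (hC : ∀ t, C t < 0)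
    (hk : ∀ t, 0 < k t) (hB : 0 ≤ B)
    (p0 p1 q0 q1 b : T → ℝ)
    (hfeas : SigFeasible Uac Uau k B tstar p0 p1 q0 q1 b)
    (hopt : ∀ p0' p1' q0' q1' b' : T → ℝ,
      SigFeasible Uac Uau k B tstar p0' p1' q0' q1' b' →
      SigObj Udc Udu P E C tstar p0' p1' q0' q1' ≤ SigObj Udc Udu P E C tstar p0 p1 q0 q1) :
    ∀ t, t ≠ tstar → p1 t = 0 ∧ q1 t = 0 := by
  classical
  intro t ht
  obtain ⟨h0, h1, h2, h3, hb, hIC, hS, hkb, hsum1, hbud⟩ := hfeas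
  suffices hδ : p1 t + q1 t ≤ 0 by
    constructor <;> linarith [h1 t, h3 t]
  by_contra hδ
  push_neg at hδ
  set p0' : T → ℝ := fun s => if s = t then p0 t + p1 t else p0 s with hp0'
  set p1' : T → ℝ := fun s => if s = t then 0 else p1 s with hp1'
  set q0' : T → ℝ := fun s => if s = t then q0 t + q1 t else q0 s with hq0'
  set q1' : T → ℝ := fun s => if s = t then 0 else q1 s with hq1'
  have hts : ¬ (tstar = t) := fun h => ht h.symm
  have hfeas' : SigFeasible Uac Uau k B tstar p0' p1' q0' q1' b := by
    refine ⟨?_, ?_, ?_, ?_, hb, ?_, ?_, ?_, ?_, hbud⟩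
    · intro s; by_cases hs : s = t
      · simp only [hp0', if_pos hs]; linarith [h0 t, h1 t]
      · simp only [hp0', if_neg hs]; exact h0 s
    · intro s; by_cases hs : s = t
      · simp only [hp1', if_pos hs]; norm_num
      · simp only [hp1', if_neg hs]; exact h1 s
    · intro s; by_cases hs : s = t
      · simp only [hq0', if_pos hs]; linarith [h2 t, h3 t]
      · simp only [hq0', if_neg hs]; exact h2 s
    · intro s; by_cases hs : s = t
      · simp only [hq1', if_pos hs]; norm_num
      · simp only [hq1', if_neg hs]; exact h3 s
    · intro s
      have hstar0 : p0' tstar = p0 tstar := by simp only [hp0', if_neg hts]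
      have hstar2 : q0' tstar = q0 tstar := by simp only [hq0', if_neg hts]
      rw [hstar0, hstar2]
      by_cases hs : s = t
      · subst hs
        simp only [hp0', hq0', if_pos rfl]
        have h4 := hIC s
        have h5 := hS s
        nlinarith
      · simp only [hp0', hq0', if_neg hs]
        exact hIC s
    · intro s
      by_cases hs : s = t
      · simp only [hp1', hq1', if_pos hs]; norm_num
      · simp only [hp1', hq1', if_neg hs]; exact hS s
    · intro s
      by_cases hs : s = t
      · subst hs
        simp only [hp0', hp1', if_pos rfl]
        have := hkb s; linarith
      · simp only [hp0', hp1', if_neg hs]; exact hkb s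
    · intro s
      by_cases hs : s = t
      · subst hs
        simp only [hp0', hp1', hq0', hq1', if_pos rfl]
        have := hsum1 s; linarith
      · simp only [hp0', hp1', hq0', hq1', if_neg hs]; exact hsum1 s
  have hle := hopt p0' p1' q0' q1' b hfeas'
  have hsum : ∑ s, (p1' s + q1' s) * P s * E s * C s
      = (∑ s, (p1 s + q1 s) * P s * E s * C s) - (p1 t + q1 t) * P t * E t * C t := by
    have e1 : ∀ f : T → ℝ, ∑ s, f s = f t + ∑ s ∈ univ.erase t, f s := by
      intro f
      rw [← Finset.add_sum_erase _ f (mem_univ t)]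
    rw [e1 (fun s => (p1' s + q1' s) * P s * E s * C s),
        e1 (fun s => (p1 s + q1 s) * P s * E s * C s)]
    have e2 : ∑ s ∈ univ.erase t, (p1' s + q1' s) * P s * E s * C s
        = ∑ s ∈ univ.erase t, (p1 s + q1 s) * P s * E s * C s := by
      apply Finset.sum_congr rfl
      intro s hs
      have hst : ¬ (s = t) := (Finset.mem_erase.mp hs).1
      simp only [hp1', hq1', if_neg hst]
    rw [e2]
    simp only [hp1', hq1', if_pos rfl]
    ring
  have hobj' : SigObj Udc Udu P E C tstar p0' p1' q0' q1'
      = SigObj Udc Udu P E C tstar p0 p1 q0 q1 - (p1 t + q1 t) * P t * E t * C t := by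
    unfold SigObj
    have hstar0 : p0' tstar = p0 tstar := by simp only [hp0', if_neg hts]
    have hstar2 : q0' tstar = q0 tstar := by simp only [hq0', if_neg hts]
    rw [hstar0, hstar2, hsum]
    ring
  rw [hobj'] at hle
  have hterm : (p1 t + q1 t) * P t * E t * C t < 0 := by
    have h4 := hP t; have h5 := hE t; have h6 := hC t
    have hpos : 0 < (p1 t + q1 t) * P t * E t := by positivity
    nlinarith
  linarith
end

section
/- Feasibility is preserved when moving all warning mass of non-best types to the no-warning signal: if (p0, p1, q0, q1, b) is feasible for the signaling LP at t*, then the point (p̄0, p̄1, q̄0, q̄1, b) defined by p̄0(t) = p0(t) + p1(t), q̄0(t) = q0(t) + q1(t), p̄1(t) = q̄1(t) = 0 for every t ≠ t*, and agreeing with (p0, p1, q0, q1) at t*, is also feasible for the signaling LP at t*. -/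
open Finset

/-- Moving all warning mass of non-best types to the no-warning signal preserves
feasibility of the signaling LP at `tstar`. -/
theorem feasibility_preserved_no_warning_shift {T : Type*} [Fintype T] [Nonempty T] [DecidableEq T]
    (Uac Uau Udc Udu P E C k : T → ℝ) (B : ℝ) (tstar : T)
    (hUac : ∀ t, Uac t < 0) (hUau : ∀ t, 0 < Uau t)
    (hUdc : ∀ t, 0 ≤ Udc t) (hUdu : ∀ t, Udu t < 0)
    (hP : ∀ t, 0 < P t) (hE : ∀ t, 0 < E t) (hC : ∀ t, C t < 0)
    (hk : ∀ t, 0 < k t) (hB : 0 ≤ B)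
    (p0 p1 q0 q1 b : T → ℝ)
    (hfeas : SigFeasible Uac Uau k B tstar p0 p1 q0 q1 b) :
    SigFeasible Uac Uau k B tstar
      (fun t => if t = tstar then p0 t else p0 t + p1 t)
      (fun t => if t = tstar then p1 t else 0)
      (fun t => if t = tstar then q0 t else q0 t + q1 t)
      (fun t => if t = tstar then q1 t else 0)
      b := by
  obtain ⟨h0, h1, h2, h3, hb, hic, hw, hkb, hsum, hbud⟩ := hfeas
  refine ⟨?_, ?_, ?_, ?_, hb, ?_, ?_, ?_, ?_, hbud⟩
  · intro t; by_cases h : t = tstar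
    · subst h; simpa using h0 t
    · simp [h]; exact add_nonneg (h0 t) (h1 t)
  · intro t; by_cases h : t = tstar
    · subst h; simpa using h1 t
    · simp [h]
  · intro t; by_cases h : t = tstar
    · subst h; simpa using h2 t
    · simp [h]; exact add_nonneg (h2 t) (h3 t)
  · intro t; by_cases h : t = tstar
    · subst h; simpa using h3 t
    · simp [h]
  · intro t; by_cases h : t = tstar
    · subst h; simpa using hic t
    · simp [h]; have := hic t; have := hw t; nlinarith
  · intro t; by_cases h : t = tstar
    · subst h; simpa using hw t
    · simp [h]
  · intro t; by_cases h : t = tstar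
    · subst h; simpa using hkb t
    · simp [h]; exact hkb t
  · intro t; by_cases h : t = tstar
    · subst h; simpa using hsum t
    · simp [h]; have := hsum t; linarith
end

section
/- Moving all warning mass of non-best types to the no-warning signal does not decrease, and generically strictly increases, the auditor's objective: let (p0, p1, q0, q1, b) be feasible for the signaling LP at t* and let (p̄0, p̄1, q̄0, q̄1, b) be defined by p̄0(t) = p0(t) + p1(t), q̄0(t) = q0(t) + q1(t), p̄1(t) = q̄1(t) = 0 for every t ≠ t*, agreeing with (p0, p1, q0, q1) at t*. Then the objective value of the modified point is ≥ that of the original point, and the inequality is strict if p1(t) + q1(t) > 0 for some t ≠ t*. -/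
open Finset

/-- Moving all warning mass of non-best types to the no-warning signal does not
decrease the auditor's objective, and strictly increases it whenever some
non-best type had positive warning mass. -/
theorem objective_improves_no_warning_shift {T : Type*} [Fintype T] [Nonempty T]
    [DecidableEq T]
    (Uac Uau Udc Udu P E C k : T → ℝ) (B : ℝ) (tstar : T)
    (hUac : ∀ t, Uac t < 0) (hUau : ∀ t, 0 < Uau t)
    (hUdc : ∀ t, 0 ≤ Udc t) (hUdu : ∀ t, Udu t < 0)
    (hP : ∀ t, 0 < P t) (hE : ∀ t, 0 < E t) (hC : ∀ t, C t < 0)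
    (hk : ∀ t, 0 < k t) (hB : 0 ≤ B)
    (p0 p1 q0 q1 b : T → ℝ)
    (hfeas : SigFeasible Uac Uau k B tstar p0 p1 q0 q1 b) :
    SigObj Udc Udu P E C tstar p0 p1 q0 q1 ≤
      SigObj Udc Udu P E C tstar
        (fun t => if t = tstar then p0 t else p0 t + p1 t)
        (fun t => if t = tstar then p1 t else 0)
        (fun t => if t = tstar then q0 t else q0 t + q1 t)
        (fun t => if t = tstar then q1 t else 0) ∧
    ((∃ t, t ≠ tstar ∧ 0 < p1 t + q1 t) →
      SigObj Udc Udu P E C tstar p0 p1 q0 q1 <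
        SigObj Udc Udu P E C tstar
          (fun t => if t = tstar then p0 t else p0 t + p1 t)
          (fun t => if t = tstar then p1 t else 0)
          (fun t => if t = tstar then q0 t else q0 t + q1 t)
          (fun t => if t = tstar then q1 t else 0)) := by
  obtain ⟨hp0, hp1, hq0, hq1, hb, hIC, hIR, hbal, hsum1, hbud⟩ := hfeas
  have hterm : ∀ t, (p1 t + q1 t) * P t * E t * C t ≤
      ((if t = tstar then p1 t else 0) + (if t = tstar then q1 t else 0)) * P t * E t * C t := by
    intro t
    by_cases h : t = tstar
    · simp [h]
    · simp only [if_neg h, add_zero, zero_mul]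
      have h1 : 0 ≤ (p1 t + q1 t) * P t * E t :=
        mul_nonneg (mul_nonneg (add_nonneg (hp1 t) (hq1 t)) (hP t).le) (hE t).le
      nlinarith [hC t]
  have hstrict : ∀ t, t ≠ tstar → 0 < p1 t + q1 t →
      (p1 t + q1 t) * P t * E t * C t <
      ((if t = tstar then p1 t else 0) + (if t = tstar then q1 t else 0)) * P t * E t * C t := by
    intro t h hpos
    simp only [if_neg h, add_zero, zero_mul]
    have h1 : 0 < (p1 t + q1 t) * P t * E t :=
      mul_pos (mul_pos hpos (hP t)) (hE t)
    nlinarith [hC t]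
  simp only [SigObj, if_pos rfl, eq_self_iff_true, if_true]
  constructor
  · have := Finset.sum_le_sum (s := Finset.univ) (fun t _ => hterm t)
    linarith
  · rintro ⟨t, ht, hpos⟩
    have := Finset.sum_lt_sum (fun s _ => hterm s) ⟨t, Finset.mem_univ t, hstrict t ht hpos⟩
    linarith
end

section
/- Equality of equilibrium coverage vectors (core of Theorem 2): let T be a finite nonempty type and for each t ∈ T let U_ac(t) < 0 < U_au(t), and define the attacker utility E_a^t(x) = x·U_ac(t) + (1−x)·U_au(t) (a strictly decreasing function of x). Let w : T → ℝ be strictly positive weights and let θ, θ' : T → ℝ with 0 ≤ θ(t) ≤ 1 and 0 ≤ θ'(t) ≤ 1 for all t and Σ_t w(t)·θ(t) = Σ_t w(t)·θ'(t). Let v be the maximum over t of E_a^t(θ(t)) and v' the maximum over t of E_a^t(θ'(t)). Assume that for every t, θ(t) > 0 implies E_a^t(θ(t)) = v, and θ'(t) > 0 implies E_a^t(θ'(t)) = v'. Then v = v' and θ(t) = θ'(t) for every t. -/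
open Finset

/-- Helper: if `v ≤ v'`, then `θ' ≤ θ` pointwise, hence by the budget equality
`θ = θ'`. -/
lemma equilibrium_coverage_aux {T : Type*} [Fintype T]
    (Uac Uau : T → ℝ) (hUac : ∀ t, Uac t < 0) (hUau : ∀ t, 0 < Uau t)
    (w : T → ℝ) (hw : ∀ t, 0 < w t)
    (θ θ' : T → ℝ)
    (hθ : ∀ t, 0 ≤ θ t) (hθ' : ∀ t, 0 ≤ θ' t)
    (hsum : ∑ t, w t * θ t = ∑ t, w t * θ' t)
    (v v' : ℝ)
    (hv : IsGreatest (Set.range fun t => θ t * Uac t + (1 - θ t) * Uau t) v)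
    (htight' : ∀ t, 0 < θ' t → θ' t * Uac t + (1 - θ' t) * Uau t = v')
    (hle : v ≤ v') : ∀ t, θ t = θ' t := by
  have hpt : ∀ t, θ' t ≤ θ t := by
    intro t
    rcases eq_or_lt_of_le (hθ' t) with h0 | hpos
    · rw [← h0]; exact hθ t
    · have h1 : θ t * Uac t + (1 - θ t) * Uau t ≤ v :=
        hv.2 (Set.mem_range_self (f := fun t => θ t * Uac t + (1 - θ t) * Uau t) t)
      have h2 := htight' t hpos
      nlinarith [hUac t, hUau t]
  have hzero : ∑ t, w t * (θ t - θ' t) = 0 := by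
    rw [show (∑ t, w t * (θ t - θ' t)) = (∑ t, w t * θ t) - ∑ t, w t * θ' t by
      rw [← Finset.sum_sub_distrib]; congr 1; ext t; ring]
    linarith
  intro t
  have := (Finset.sum_eq_zero_iff_of_nonneg (fun t _ =>
    mul_nonneg (hw t).le (by linarith [hpt t]))).mp hzero t (Finset.mem_univ t)
  have hwt := hw t
  nlinarith

/-- Core of Theorem 2: two equilibrium coverage vectors consuming the same audit
budget, each tight at the attacker's maximal utility on its support, coincide,
and they induce the same maximal attacker utility. -/
theorem equilibrium_coverage_unique {T : Type*} [Fintype T] [Nonempty T]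
    (Uac Uau : T → ℝ) (hUac : ∀ t, Uac t < 0) (hUau : ∀ t, 0 < Uau t)
    (w : T → ℝ) (hw : ∀ t, 0 < w t)
    (θ θ' : T → ℝ)
    (hθ : ∀ t, 0 ≤ θ t ∧ θ t ≤ 1) (hθ' : ∀ t, 0 ≤ θ' t ∧ θ' t ≤ 1)
    (hsum : ∑ t, w t * θ t = ∑ t, w t * θ' t)
    (v v' : ℝ)
    (hv : IsGreatest (Set.range fun t => θ t * Uac t + (1 - θ t) * Uau t) v)
    (hv' : IsGreatest (Set.range fun t => θ' t * Uac t + (1 - θ' t) * Uau t) v')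
    (htight : ∀ t, 0 < θ t → θ t * Uac t + (1 - θ t) * Uau t = v)
    (htight' : ∀ t, 0 < θ' t → θ' t * Uac t + (1 - θ' t) * Uau t = v') :
    v = v' ∧ ∀ t, θ t = θ' t := by
  have key : ∀ t, θ t = θ' t := by
    rcases le_total v v' with h | h
    · exact equilibrium_coverage_aux Uac Uau hUac hUau w hw θ θ'
        (fun t => (hθ t).1) (fun t => (hθ' t).1) hsum v v' hv htight' h
    · intro t
      exact (equilibrium_coverage_aux Uac Uau hUac hUau w hw θ' θ
        (fun t => (hθ' t).1) (fun t => (hθ t).1) hsum.symm v' v hv' htight h t).symm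
  refine ⟨?_, key⟩
  have : (fun t => θ t * Uac t + (1 - θ t) * Uau t)
      = fun t => θ' t * Uac t + (1 - θ' t) * Uau t := funext fun t => by rw [key t]
  rw [this] at hv
  exact IsGreatest.unique hv hv'
end

section
/- Every no-signaling (online SSE) solution embeds into the signaling LP with the same auditor utility: if (θ, b) is feasible for the online SSE LP at t*, then the point (p0, p1, q0, q1, b) with p0(t) = θ(t), p1(t) = 0, q0(t) = 1 − θ(t), q1(t) = 0 for all t is feasible for the signaling LP at t*, and its signaling objective value equals the SSE objective value θ(t*)·U_dc(t*) + (1−θ(t*))·U_du(t*). -/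
open Finset

/-- Feasibility for the online SSE LP at the designated type `tstar`. -/
def SSEFeasible {T : Type*} [Fintype T] (Uac Uau k : T → ℝ) (B : ℝ) (tstar : T)
    (θ b : T → ℝ) : Prop :=
  (∀ t, 0 ≤ θ t ∧ θ t ≤ 1) ∧ (∀ t, 0 ≤ b t ∧ b t ≤ B) ∧
  (∀ t, θ t = k t * b t) ∧
  (∀ t, θ t * Uac t + (1 - θ t) * Uau t ≤
    θ tstar * Uac tstar + (1 - θ tstar) * Uau tstar) ∧
  (∑ t, b t ≤ B)

/-- Every feasible solution of the online SSE LP embeds into the signaling LP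
(with no warning ever sent) with the same auditor utility. -/
theorem sse_embeds_into_signaling {T : Type*} [Fintype T] [Nonempty T]
    (Uac Uau Udc Udu P E C k : T → ℝ) (B : ℝ) (tstar : T)
    (hUac : ∀ t, Uac t < 0) (hUau : ∀ t, 0 < Uau t)
    (hUdc : ∀ t, 0 ≤ Udc t) (hUdu : ∀ t, Udu t < 0)
    (hP : ∀ t, 0 < P t) (hE : ∀ t, 0 < E t) (hC : ∀ t, C t < 0)
    (hk : ∀ t, 0 < k t) (hB : 0 ≤ B)
    (θ b : T → ℝ)
    (hfeas : SSEFeasible Uac Uau k B tstar θ b) :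
    SigFeasible Uac Uau k B tstar θ (fun _ => 0) (fun t => 1 - θ t) (fun _ => 0) b ∧
    SigObj Udc Udu P E C tstar θ (fun _ => 0) (fun t => 1 - θ t) (fun _ => 0) =
      θ tstar * Udc tstar + (1 - θ tstar) * Udu tstar := by
  obtain ⟨hθ, hb, hkb, hic, hbud⟩ := hfeas
  constructor
  · refine ⟨fun t => (hθ t).1, fun t => le_refl 0, fun t => by simpa using (hθ t).2,
      fun t => le_refl 0, hb, fun t => hic t, fun t => by norm_num,
      fun t => by simpa using hkb t, fun t => by ring, hbud⟩
  · simp [SigObj]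
end

section
/- Signaling never hurts the auditor (Theorem 3): for every designated type t*, the supremum of objective values over feasible points of the signaling LP at t* is greater than or equal to the supremum of objective values over feasible points of the online SSE LP at t*. In particular, the auditor's optimal expected utility at the OSSP is never worse than at the online SSE. -/
open Finset

/-- Theorem 3 (signaling never hurts the auditor): the optimal value of the
signaling LP at `tstar` is at least the optimal value of the online SSE LP
at `tstar`. -/
theorem signaling_never_hurts {T : Type*} [Fintype T] [Nonempty T]
    (Uac Uau Udc Udu P E C k : T → ℝ) (B : ℝ) (tstar : T)
    (hUac : ∀ t, Uac t < 0) (hUau : ∀ t, 0 < Uau t)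
    (hUdc : ∀ t, 0 ≤ Udc t) (hUdu : ∀ t, Udu t < 0)
    (hP : ∀ t, 0 < P t) (hE : ∀ t, 0 < E t) (hC : ∀ t, C t < 0)
    (hk : ∀ t, 0 < k t) (hB : 0 ≤ B)
    (hSSE : ∃ θ b : T → ℝ, SSEFeasible Uac Uau k B tstar θ b)
    (hSig : ∃ p0 p1 q0 q1 b : T → ℝ, SigFeasible Uac Uau k B tstar p0 p1 q0 q1 b) :
    sSup {v : ℝ | ∃ θ b : T → ℝ, SSEFeasible Uac Uau k B tstar θ b ∧
        v = θ tstar * Udc tstar + (1 - θ tstar) * Udu tstar} ≤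
      sSup {v : ℝ | ∃ p0 p1 q0 q1 b : T → ℝ,
        SigFeasible Uac Uau k B tstar p0 p1 q0 q1 b ∧
        v = SigObj Udc Udu P E C tstar p0 p1 q0 q1} := by
  apply csSup_le_csSup
  · -- bounded above by Udc tstar
    refine ⟨Udc tstar, ?_⟩
    rintro v ⟨p0, p1, q0, q1, b, ⟨h0, h1, h2, h3, hb, hIC, hIC1, hkb, hsum, hbud⟩, rfl⟩
    have h01 : p0 tstar ≤ 1 := by
      have := hsum tstar
      nlinarith [h1 tstar, h2 tstar, h3 tstar]
    have hq : q0 tstar * Udu tstar ≤ 0 :=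
      mul_nonpos_of_nonneg_of_nonpos (h2 tstar) (le_of_lt (hUdu tstar))
    have hs : ∑ t, (p1 t + q1 t) * P t * E t * C t ≤ 0 := by
      apply Finset.sum_nonpos
      intro t _
      have : 0 ≤ (p1 t + q1 t) * P t * E t :=
        mul_nonneg (mul_nonneg (add_nonneg (h1 t) (h3 t)) (le_of_lt (hP t))) (le_of_lt (hE t))
      exact mul_nonpos_of_nonneg_of_nonpos this (le_of_lt (hC t))
    have hp : p0 tstar * Udc tstar ≤ Udc tstar := by
      nlinarith [hUdc tstar]
    unfold SigObj
    linarith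
  · -- SSE set nonempty
    obtain ⟨θ, b, hθb⟩ := hSSE
    exact ⟨_, θ, b, hθb, rfl⟩
  · -- inclusion via p0 = θ, q0 = 1 - θ, p1 = q1 = 0
    rintro v ⟨θ, b, ⟨hθ, hb, hkb, hIC, hbud⟩, rfl⟩
    refine ⟨θ, (fun _ => 0), (fun t => 1 - θ t), (fun _ => 0), b,
      ⟨fun t => (hθ t).1, fun t => le_refl 0, fun t => by simp only; linarith [(hθ t).2],
       fun t => le_refl 0, hb, fun t => by simpa using hIC t,
       fun t => by simp, fun t => by simpa using hkb t,
       fun t => by ring, hbud⟩, ?_⟩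
    unfold SigObj
    simp
end

section
/- Theorem 4, case β > 0 (reduced two-variable form): let U_ac < 0 < U_au, θ ∈ [0,1], β = θ·U_ac + (1−θ)·U_au, and α, γ ∈ ℝ with α > 0 > γ and α·U_au < γ·U_ac. Suppose β > 0. Then (p, q) = (0, β/U_au) is the unique maximizer of the function α·p + γ·q over the set S = {(p, q) : 0 ≤ p ≤ θ, 0 ≤ q ≤ 1−θ, p·U_ac + q·U_au ≥ β}. Equivalently, writing p0 = p, q0 = q, p1 = θ − p, q1 = (1−θ) − q, the optimal signaling scheme is p1 = θ, p0 = 0, q0 = β/U_au, q1 = 1 − θ − β/U_au; in particular p0 = 0, i.e., an unaudited alert is never silent at the optimum. -/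
/-- Theorem 4, case `β > 0` (reduced two-variable form): under the payoff
hypothesis `α·U_au < γ·U_ac`, the point `(p, q) = (0, β/U_au)` is the unique
maximizer of `α·p + γ·q` over
`S = {(p,q) : 0 ≤ p ≤ θ, 0 ≤ q ≤ 1−θ, p·U_ac + q·U_au ≥ β}`.
In particular `p0 = 0` at the optimum. -/
theorem ossp_silent_never_audited_of_beta_pos
    (Uac Uau θ α γ β : ℝ)
    (hUac : Uac < 0) (hUau : 0 < Uau)
    (hθ0 : 0 ≤ θ) (hθ1 : θ ≤ 1)
    (hβ : β = θ * Uac + (1 - θ) * Uau)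
    (hα : 0 < α) (hγ : γ < 0)
    (hcond : α * Uau < γ * Uac)
    (hβpos : 0 < β) :
    ((0 : ℝ) ≤ θ ∧ 0 ≤ β / Uau ∧ β / Uau ≤ 1 - θ ∧
      (0 : ℝ) * Uac + (β / Uau) * Uau ≥ β) ∧
    (∀ p q : ℝ, 0 ≤ p → p ≤ θ → 0 ≤ q → q ≤ 1 - θ → p * Uac + q * Uau ≥ β →
      α * p + γ * q ≤ α * 0 + γ * (β / Uau)) ∧
    (∀ p q : ℝ, 0 ≤ p → p ≤ θ → 0 ≤ q → q ≤ 1 - θ → p * Uac + q * Uau ≥ β →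
      α * p + γ * q = α * 0 + γ * (β / Uau) → p = 0 ∧ q = β / Uau) := by
  have hUau' : Uau ≠ 0 := ne_of_gt hUau
  have hc : (β / Uau) * Uau = β := div_mul_cancel₀ β hUau'
  have hco : α * Uau - γ * Uac < 0 := by linarith
  refine ⟨⟨hθ0, div_nonneg hβpos.le hUau.le, ?_, by rw [hc]; linarith⟩, ?_, ?_⟩
  · rw [div_le_iff₀ hUau]
    nlinarith [mul_nonpos_of_nonneg_of_nonpos hθ0 hUac.le]
  · intro p q hp hpθ hq hq1 hfeas
    rw [mul_zero, zero_add]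
    rw [← mul_le_mul_iff_of_pos_right hUau, add_mul, mul_assoc γ (β / Uau), hc]
    nlinarith [mul_nonneg hp (sub_nonneg.2 hcond.le), mul_le_mul_of_nonpos_left hfeas hγ.le]
  · intro p q hp hpθ hq hq1 hfeas heq
    rw [mul_zero, zero_add] at heq
    have hp0 : p = 0 := by
      refine le_antisymm ?_ hp
      nlinarith [mul_le_mul_of_nonpos_left hfeas hγ.le, mul_pos hα hUau]
    refine ⟨hp0, ?_⟩
    have : γ * q = γ * (β / Uau) := by rw [hp0] at heq; linarith
    exact mul_left_cancel₀ hγ.ne this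
end

section
/- Theorem 4, case β ≤ 0 (reduced two-variable form): let U_ac < 0 < U_au, θ ∈ [0,1], β = θ·U_ac + (1−θ)·U_au, and α, γ ∈ ℝ with α > 0 > γ and α·U_au < γ·U_ac. Suppose β ≤ 0 and impose the attacker-participation constraint p·U_ac + q·U_au ≥ 0 in place of ≥ β. Then (p, q) = (0, 0) is the unique maximizer of α·p + γ·q over the set S' = {(p, q) : 0 ≤ p ≤ θ, 0 ≤ q ≤ 1−θ, p·U_ac + q·U_au ≥ 0}. Equivalently, the optimal signaling scheme is p1 = θ, q1 = 1−θ, p0 = q0 = 0; in particular p0 = 0. -/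
/-- Theorem 4, case `β ≤ 0` (reduced two-variable form): with the
attacker-participation constraint `p·U_ac + q·U_au ≥ 0`, the point
`(p, q) = (0, 0)` is the unique maximizer of `α·p + γ·q` over
`S' = {(p,q) : 0 ≤ p ≤ θ, 0 ≤ q ≤ 1−θ, p·U_ac + q·U_au ≥ 0}`.
Equivalently the optimal scheme is `p1 = θ, q1 = 1−θ, p0 = q0 = 0`. -/
theorem ossp_silent_never_audited_of_beta_nonpos
    (Uac Uau θ α γ β : ℝ)
    (hUac : Uac < 0) (hUau : 0 < Uau)
    (hθ0 : 0 ≤ θ) (hθ1 : θ ≤ 1)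
    (hβ : β = θ * Uac + (1 - θ) * Uau)
    (hα : 0 < α) (hγ : γ < 0)
    (hcond : α * Uau < γ * Uac)
    (hβnonpos : β ≤ 0) :
    ((0 : ℝ) ≤ θ ∧ (0 : ℝ) ≤ 1 - θ ∧
      (0 : ℝ) * Uac + (0 : ℝ) * Uau ≥ 0) ∧
    (∀ p q : ℝ, 0 ≤ p → p ≤ θ → 0 ≤ q → q ≤ 1 - θ → p * Uac + q * Uau ≥ 0 →
      α * p + γ * q ≤ α * 0 + γ * 0) ∧
    (∀ p q : ℝ, 0 ≤ p → p ≤ θ → 0 ≤ q → q ≤ 1 - θ → p * Uac + q * Uau ≥ 0 →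
      α * p + γ * q = α * 0 + γ * 0 → p = 0 ∧ q = 0) := by
  refine ⟨⟨hθ0, by linarith, by simp⟩, ?_, ?_⟩
  · intro p q hp hpθ hq hqθ hcons
    nlinarith [mul_nonneg hp (le_of_lt (sub_pos.mpr hcond))]
  · intro p q hp hpθ hq hqθ hcons heq
    have hp0 : p = 0 := by nlinarith
    have hq0 : q = 0 := by
      subst hp0; simp at heq; rcases heq with h | h
      · linarith
      · exact h
    exact ⟨hp0, hq0⟩
end

section
/- Theorem 5, final step (if signaling is off the SAG degenerates to the online SSG): suppose (p0, p1, q0, q1, b) is an optimal solution of the signaling LP at t* satisfying p1(t) = 0 and q1(t) = 0 for every t ∈ T. Then (θ, b) with θ(t) = p0(t) is feasible for the online SSE LP at t*, its SSE objective value equals the signaling objective value of (p0, p1, q0, q1, b), and consequently the supremum of objective values of the signaling LP at t* equals the supremum of objective values of the online SSE LP at t*; that is, the auditor receives the same optimal expected utility with and without signaling. -/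
open Finset

/-- Theorem 5, final step: if an optimal solution of the signaling LP sends no
warnings at all, then `θ = p0` is feasible for the online SSE LP with the same
objective value, and the optimal values of the two LPs coincide. -/
theorem sag_degenerates_to_online_ssg {T : Type*} [Fintype T] [Nonempty T]
    (Uac Uau Udc Udu P E C k : T → ℝ) (B : ℝ) (tstar : T)
    (hUac : ∀ t, Uac t < 0) (hUau : ∀ t, 0 < Uau t)
    (hUdc : ∀ t, 0 ≤ Udc t) (hUdu : ∀ t, Udu t < 0)
    (hP : ∀ t, 0 < P t) (hE : ∀ t, 0 < E t) (hC : ∀ t, C t < 0)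
    (hk : ∀ t, 0 < k t) (hB : 0 ≤ B)
    (p0 p1 q0 q1 b : T → ℝ)
    (hfeas : SigFeasible Uac Uau k B tstar p0 p1 q0 q1 b)
    (hopt : ∀ p0' p1' q0' q1' b' : T → ℝ,
      SigFeasible Uac Uau k B tstar p0' p1' q0' q1' b' →
      SigObj Udc Udu P E C tstar p0' p1' q0' q1' ≤ SigObj Udc Udu P E C tstar p0 p1 q0 q1)
    (hp1 : ∀ t, p1 t = 0) (hq1 : ∀ t, q1 t = 0) :
    SSEFeasible Uac Uau k B tstar p0 b ∧
    p0 tstar * Udc tstar + (1 - p0 tstar) * Udu tstar =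
      SigObj Udc Udu P E C tstar p0 p1 q0 q1 ∧
    sSup {v : ℝ | ∃ p0' p1' q0' q1' b' : T → ℝ,
        SigFeasible Uac Uau k B tstar p0' p1' q0' q1' b' ∧
        v = SigObj Udc Udu P E C tstar p0' p1' q0' q1'} =
      sSup {v : ℝ | ∃ θ' b' : T → ℝ, SSEFeasible Uac Uau k B tstar θ' b' ∧
        v = θ' tstar * Udc tstar + (1 - θ' tstar) * Udu tstar} := by
  obtain ⟨h0, h1, h2, h3, hb, hinc, hw, hkb, hsum, hbud⟩ := hfeas
  have hq0 : ∀ t, q0 t = 1 - p0 t := by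
    intro t; have := hsum t; simp [hp1 t, hq1 t] at this; linarith
  have hsse : SSEFeasible Uac Uau k B tstar p0 b := by
    refine ⟨fun t => ⟨h0 t, ?_⟩, hb, fun t => by have := hkb t; simpa [hp1 t] using this,
      fun t => by have := hinc t; rw [hq0 t, hq0 tstar] at this; linarith, hbud⟩
    have := h2 t; rw [hq0 t] at this; linarith
  have hobj : p0 tstar * Udc tstar + (1 - p0 tstar) * Udu tstar =
      SigObj Udc Udu P E C tstar p0 p1 q0 q1 := by
    simp [SigObj, hq0 tstar, hp1, hq1]
  refine ⟨hsse, hobj, ?_⟩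
  set V := SigObj Udc Udu P E C tstar p0 p1 q0 q1 with hV
  -- embedding: every SSE feasible point yields a signaling feasible point
  have hembed : ∀ θ' b' : T → ℝ, SSEFeasible Uac Uau k B tstar θ' b' →
      SigFeasible Uac Uau k B tstar θ' (fun _ => 0) (fun t => 1 - θ' t) (fun _ => 0) b' ∧
      SigObj Udc Udu P E C tstar θ' (fun _ => 0) (fun t => 1 - θ' t) (fun _ => 0) =
        θ' tstar * Udc tstar + (1 - θ' tstar) * Udu tstar := by
    intro θ' b' ⟨hθ, hb', hkb', hinc', hbud'⟩
    constructor
    · exact ⟨fun t => (hθ t).1, fun t => le_refl 0,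
        fun t => show (0:ℝ) ≤ 1 - θ' t by linarith [(hθ t).2],
        fun t => le_refl 0, hb', fun t => by simpa using hinc' t,
        fun t => by simp, fun t => by simpa using hkb' t, fun t => by ring, hbud'⟩
    · simp [SigObj]
  have hSigSet : {v : ℝ | ∃ p0' p1' q0' q1' b' : T → ℝ,
        SigFeasible Uac Uau k B tstar p0' p1' q0' q1' b' ∧
        v = SigObj Udc Udu P E C tstar p0' p1' q0' q1'}.Nonempty :=
    ⟨V, p0, p1, q0, q1, b, ⟨h0, h1, h2, h3, hb, hinc, hw, hkb, hsum, hbud⟩, rfl⟩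
  have hSigSup : sSup {v : ℝ | ∃ p0' p1' q0' q1' b' : T → ℝ,
        SigFeasible Uac Uau k B tstar p0' p1' q0' q1' b' ∧
        v = SigObj Udc Udu P E C tstar p0' p1' q0' q1'} = V := by
    apply le_antisymm
    · apply csSup_le hSigSet
      rintro v ⟨p0', p1', q0', q1', b', hf, rfl⟩
      exact hopt _ _ _ _ _ hf
    · refine le_csSup ⟨V, ?_⟩ ⟨p0, p1, q0, q1, b, ⟨h0, h1, h2, h3, hb, hinc, hw, hkb, hsum, hbud⟩, rfl⟩
      rintro v ⟨p0', p1', q0', q1', b', hf, rfl⟩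
      exact hopt _ _ _ _ _ hf
  rw [hSigSup]
  -- SSE set is bounded above by V and contains V
  have hmemSSE : V ∈ {v : ℝ | ∃ θ' b' : T → ℝ, SSEFeasible Uac Uau k B tstar θ' b' ∧
        v = θ' tstar * Udc tstar + (1 - θ' tstar) * Udu tstar} :=
    ⟨p0, b, hsse, hobj.symm⟩
  have hbdd : ∀ v ∈ {v : ℝ | ∃ θ' b' : T → ℝ, SSEFeasible Uac Uau k B tstar θ' b' ∧
        v = θ' tstar * Udc tstar + (1 - θ' tstar) * Udu tstar}, v ≤ V := by
    rintro v ⟨θ', b', hf, rfl⟩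
    obtain ⟨hf', heq⟩ := hembed θ' b' hf
    rw [← heq]
    exact hopt _ _ _ _ _ hf'
  exact le_antisymm (le_csSup ⟨V, hbdd⟩ hmemSSE) (csSup_le ⟨V, hmemSSE⟩ hbdd)
end

section
/- Monotone comparison step used in Theorem 2: let T be a finite nonempty type, for each t ∈ T let U_ac(t) < 0 < U_au(t) and E_a^t(x) = x·U_ac(t) + (1−x)·U_au(t), and let w : T → ℝ be strictly positive weights. Let θ, θ' : T → ℝ with 0 ≤ θ(t) ≤ 1 and 0 ≤ θ'(t) ≤ 1 for all t, let v be the maximum over t of E_a^t(θ(t)) and v' the maximum over t of E_a^t(θ'(t)), and assume every t with θ(t) > 0 satisfies E_a^t(θ(t)) = v. If v > v', then θ(t) ≤ θ'(t) for every t, with strict inequality for every t such that θ(t) > 0; consequently if additionally Σ_t w(t)·θ(t) = Σ_t w(t)·θ'(t), then θ(t) = 0 for all t. -/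
open Finset

/-- Monotone comparison step used in Theorem 2: if the attacker's maximal
utility under coverage `θ` strictly exceeds that under `θ'`, and every
positively covered type of `θ` is tight at the maximum, then `θ ≤ θ'`
pointwise, strictly on the support of `θ`; hence if both coverage vectors also
consume the same audit budget, `θ` vanishes identically. -/
theorem coverage_monotone_comparison {T : Type*} [Fintype T] [Nonempty T]
    (Uac Uau : T → ℝ) (hUac : ∀ t, Uac t < 0) (hUau : ∀ t, 0 < Uau t)
    (w : T → ℝ) (hw : ∀ t, 0 < w t)
    (θ θ' : T → ℝ)
    (hθ : ∀ t, 0 ≤ θ t ∧ θ t ≤ 1) (hθ' : ∀ t, 0 ≤ θ' t ∧ θ' t ≤ 1)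
    (v v' : ℝ)
    (hv : IsGreatest (Set.range fun t => θ t * Uac t + (1 - θ t) * Uau t) v)
    (hv' : IsGreatest (Set.range fun t => θ' t * Uac t + (1 - θ' t) * Uau t) v')
    (htight : ∀ t, 0 < θ t → θ t * Uac t + (1 - θ t) * Uau t = v)
    (hlt : v' < v) :
    (∀ t, θ t ≤ θ' t) ∧ (∀ t, 0 < θ t → θ t < θ' t) ∧
    (∑ t, w t * θ t = ∑ t, w t * θ' t → ∀ t, θ t = 0) := by
  have hstrict : ∀ t, 0 < θ t → θ t < θ' t := by
    intro t ht
    have h1 : θ' t * Uac t + (1 - θ' t) * Uau t ≤ v' := hv'.2 ⟨t, rfl⟩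
    have h2 : θ t * Uac t + (1 - θ t) * Uau t = v := htight t ht
    have hE : θ' t * Uac t + (1 - θ' t) * Uau t < θ t * Uac t + (1 - θ t) * Uau t := by
      rw [h2]; exact lt_of_le_of_lt h1 hlt
    -- E is strictly decreasing in coverage
    nlinarith [hUac t, hUau t]
  have hle : ∀ t, θ t ≤ θ' t := by
    intro t
    rcases lt_or_eq_of_le (hθ t).1 with ht | ht
    · exact (hstrict t ht).le
    · rw [← ht]; exact (hθ' t).1
  refine ⟨hle, hstrict, ?_⟩
  intro hsum t
  by_contra h
  have ht : 0 < θ t := lt_of_le_of_ne (hθ t).1 (Ne.symm h)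
  have key : ∀ s ∈ Finset.univ, w s * θ s ≤ w s * θ' s := fun s _ =>
    mul_le_mul_of_nonneg_left (hle s) (hw s).le
  have hlt' : w t * θ t < w t * θ' t :=
    mul_lt_mul_of_pos_left (hstrict t ht) (hw t)
  have := Finset.sum_lt_sum key ⟨t, Finset.mem_univ t, hlt'⟩
  exact absurd hsum (ne_of_lt this)
end
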